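/- arXiv:2103.12302 — 2 statements merged into one kernel-verified Lean document; each statement's English description precedes it below -/
import Mathlib

section
/- Let $n \geq 1$ and let $I_i = [a_i, b_i]$, $1 \leq i \leq n$, be closed real intervals ordered so that $a_1 \leq b_1 \leq a_2 \leq b_2 \leq \cdots \leq a_n \leq b_n$. Then for any collection of nonnegative real numbers $\{\alpha_{ij}\}_{1 \leq i < j \leq n}$, there exists an integer $K_0$ with $1 \leq K_0 < n$ (when $n \geq 2$; the inequality is trivial for $n = 1$) such that $\sum_{i<j} \alpha_{ij}(a_j - b_i) \geq \left(b_n - a_1 - \sum_{i=1}^n (b_i - a_i)\right) \sum_{1 \leq i \leq K_0 < j \leq n} \alpha_{ij}$. -/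
/-!
Write `g k = a (k+1) - b k` for the gap after the `k`-th interval. Telescoping shows that the
total gap `∑_{1 ≤ k < n} g k` equals `b n - a 1 - ∑ (b i - a i)`, and that
`a j - b i ≥ ∑_{i ≤ k < j} g k` because the intervals strictly between `i` and `j` have
nonnegative length. Exchanging the order of summation,
`∑_{i<j} α i j (a j - b i) ≥ ∑_k g k · S k`, where `S k = ∑_{i ≤ k < j} α i j` is the weight
crossing the cut after `k`. As the gaps are nonnegative, this weighted sum is at least the total
gap times the smallest `S k`, and `K₀` is taken to be a cut of smallest crossing weight.
-/

open Finset

section Telescoping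

variable {G : Type*} [AddCommGroup G] (a b : ℕ → G) {i j : ℕ}

theorem sum_Ico_gap_add_sum_Ico_length (h : i ≤ j) :
    ∑ k ∈ Ico i j, (a (k + 1) - b k) + ∑ k ∈ Ico i j, (b k - a k) = a j - a i := by
  rw [← sum_add_distrib, ← sum_Ico_sub a h]
  exact sum_congr rfl fun k _ => sub_add_sub_cancel _ _ _

theorem sub_eq_sum_Ico_gap_add_sum_Ioo_length (h : i < j) :
    a j - b i = ∑ k ∈ Ico i j, (a (k + 1) - b k) + ∑ k ∈ Ioo i j, (b k - a k) := by
  have htel := sum_Ico_gap_add_sum_Ico_length a b h.le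
  rw [sum_eq_sum_Ico_succ_bot h fun k => b k - a k] at htel
  rw [← Ico_add_one_left_eq_Ioo, eq_add_of_sub_eq htel.symm]
  abel

theorem sub_sub_sum_Icc_length_eq_sum_Ico_gap (h : i ≤ j) :
    b j - a i - ∑ k ∈ Icc i j, (b k - a k) = ∑ k ∈ Ico i j, (a (k + 1) - b k) := by
  have htel := sum_Ico_gap_add_sum_Ico_length a b h
  rw [← Ico_add_one_right_eq_Icc, sum_Ico_succ_top h, eq_add_of_sub_eq htel.symm]
  abel

end Telescoping

theorem sum_Ico_gap_le_sub {G : Type*} [AddCommGroup G] [PartialOrder G] [IsOrderedAddMonoid G]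
    {a b : ℕ → G} {i j : ℕ} (h : i < j) (hab : ∀ k ∈ Ioo i j, a k ≤ b k) :
    ∑ k ∈ Ico i j, (a (k + 1) - b k) ≤ a j - b i := by
  rw [sub_eq_sum_Ico_gap_add_sum_Ioo_length a b h]
  exact le_add_of_nonneg_right (sum_nonneg fun k hk => sub_nonneg.2 (hab k hk))

/-- Both sides sum `f i j * g k` over the triples `m ≤ i ≤ k < j ≤ n`. -/
theorem sum_Icc_sum_Icc_mul_sum_Ico_eq_sum_Ico_mul_cut {R : Type*} [CommSemiring R]
    (f : ℕ → ℕ → R) (g : ℕ → R) (m n : ℕ) :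
    ∑ i ∈ Icc m n, ∑ j ∈ Icc (i + 1) n, f i j * ∑ k ∈ Ico i j, g k
      = ∑ k ∈ Ico m n, g k * ∑ i ∈ Icc m k, ∑ j ∈ Icc (k + 1) n, f i j := by
  simp_rw [mul_sum]
  calc ∑ i ∈ Icc m n, ∑ j ∈ Icc (i + 1) n, ∑ k ∈ Ico i j, f i j * g k
      = ∑ i ∈ Icc m n, ∑ k ∈ Ico i n, ∑ j ∈ Icc (k + 1) n, f i j * g k :=
        sum_congr rfl fun i _ => sum_comm' (t' := Ico i n) fun j k => by
          simp only [mem_Icc, mem_Ico]; omega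
    _ = ∑ k ∈ Ico m n, ∑ i ∈ Icc m k, ∑ j ∈ Icc (k + 1) n, g k * f i j := by
        rw [sum_comm' (t' := Ico m n) (s' := fun k => Icc m k) fun i k => by
          simp only [mem_Icc, mem_Ico]; omega]
        simp_rw [mul_comm]

theorem exists_sum_mul_le_sum_mul {R : Type*} [Semiring R] [LinearOrder R] [IsOrderedRing R]
    {ι : Type*} {s : Finset ι} (hs : s.Nonempty) {w : ι → R} (hw : ∀ k ∈ s, 0 ≤ w k)
    (S : ι → R) : ∃ K ∈ s, (∑ k ∈ s, w k) * S K ≤ ∑ k ∈ s, w k * S k := by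
  obtain ⟨K, hK, hmin⟩ := s.exists_min_image S hs
  exact ⟨K, hK, sum_mul s w (S K) ▸
    sum_le_sum fun k hk => mul_le_mul_of_nonneg_left (hmin k hk) (hw k hk)⟩

/-- Interval gap lemma: for ordered closed intervals `[a i, b i]`, `1 ≤ i ≤ n`, and
nonnegative weights `α i j` for `i < j`, there is a cut `K₀` with `1 ≤ K₀ < n` such that
`∑_{i<j} α i j (a j - b i) ≥ (b n - a 1 - ∑ (b i - a i)) ∑_{i ≤ K₀ < j} α i j`. -/
theorem interval_gap_lemma (n : ℕ) (hn : 2 ≤ n) (a b : ℕ → ℝ) (α : ℕ → ℕ → ℝ)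
    (hab : ∀ i, 1 ≤ i → i ≤ n → a i ≤ b i)
    (hba : ∀ i, 1 ≤ i → i < n → b i ≤ a (i + 1))
    (hα : ∀ i j, 1 ≤ i → i < j → j ≤ n → 0 ≤ α i j) :
    ∃ K₀, 1 ≤ K₀ ∧ K₀ < n ∧
      (b n - a 1 - ∑ i ∈ Finset.Icc 1 n, (b i - a i)) *
        (∑ i ∈ Finset.Icc 1 K₀, ∑ j ∈ Finset.Icc (K₀ + 1) n, α i j)
      ≤ ∑ i ∈ Finset.Icc 1 n, ∑ j ∈ Finset.Icc (i + 1) n, α i j * (a j - b i) := by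
  have hgap : ∀ k ∈ Ico 1 n, 0 ≤ a (k + 1) - b k := fun k hk => by
    rw [mem_Ico] at hk
    exact sub_nonneg.2 (hba k hk.1 hk.2)
  obtain ⟨K₀, hK₀, hmin⟩ := exists_sum_mul_le_sum_mul (nonempty_Ico.2 (by omega)) hgap
    fun k => ∑ i ∈ Icc 1 k, ∑ j ∈ Icc (k + 1) n, α i j
  rw [mem_Ico] at hK₀
  refine ⟨K₀, hK₀.1, hK₀.2, ?_⟩
  calc (b n - a 1 - ∑ i ∈ Icc 1 n, (b i - a i)) *
        (∑ i ∈ Icc 1 K₀, ∑ j ∈ Icc (K₀ + 1) n, α i j)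
      ≤ ∑ k ∈ Ico 1 n,
          (a (k + 1) - b k) * ∑ i ∈ Icc 1 k, ∑ j ∈ Icc (k + 1) n, α i j := by
        rwa [sub_sub_sum_Icc_length_eq_sum_Ico_gap a b (by omega)]
    _ = ∑ i ∈ Icc 1 n, ∑ j ∈ Icc (i + 1) n, α i j * ∑ k ∈ Ico i j, (a (k + 1) - b k) :=
        (sum_Icc_sum_Icc_mul_sum_Ico_eq_sum_Ico_mul_cut _ _ _ _).symm
    _ ≤ ∑ i ∈ Icc 1 n, ∑ j ∈ Icc (i + 1) n, α i j * (a j - b i) := by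
        refine sum_le_sum fun i hi => sum_le_sum fun j hj => ?_
        rw [mem_Icc] at hi hj
        refine mul_le_mul_of_nonneg_left (sum_Ico_gap_le_sub (by omega) fun k hk => ?_)
          (hα i j hi.1 (by omega) hj.2)
        rw [mem_Ioo] at hk
        exact hab k (by omega) (by omega)
end

section
/- Let $m, N$ be positive integers, let $\{r_k\}$ be a family of positive reals indexed by a finite set of 'collars' each labeled by a pair $(p,q)$ with $1 \leq p < q \leq N$, and let $[e_1,f_1], \ldots, [e_N,f_N]$ be disjoint closed intervals with $e_1 \leq f_1 < e_2 \leq f_2 < \cdots < e_N \leq f_N$. Suppose that for every integer $K$ with $1 \leq K < N$ one has $\sum_{\text{collars labeled } (p,q),\, p \leq K < q} r_k \geq L$ for some fixed $L > 0$. Then $\sum_{\text{all collars } k \text{ labeled } (p,q)} \sqrt{r_k} \cdot (e_q - f_p) \geq \sqrt{L}\left(f_N - e_1 - \sum_{i=1}^N (f_i - e_i)\right)$. -/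
open Finset

/-!
Write `g c = e (c + 1) - f c` for the gap between consecutive intervals. The quantity
`f N - e 1 - ∑ (f i - e i)` is the total gap `∑_{1 ≤ c < N} g c`, while a collar `(p, q)`
spans at least the gaps `g c` with `p ≤ c < q`. Each cut `c` is crossed by collars whose weights
sum to at least `L`, and `√` is subadditive, so `√L ≤ ∑_{k crosses c} √(r k)`. Multiplying by
`g c ≥ 0`, summing over the cuts and exchanging the two sums gives the inequality.
-/

namespace Real

theorem sqrt_add_le_add_sqrt (x y : ℝ) : √(x + y) ≤ √x + √y := by
  rw [sqrt_le_left (by positivity), add_sq, sq_sqrt', sq_sqrt']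
  nlinarith [le_max_left x 0, le_max_left y 0, mul_nonneg (sqrt_nonneg x) (sqrt_nonneg y)]

theorem sqrt_sum_le_sum_sqrt {ι : Type*} (s : Finset ι) (r : ι → ℝ) :
    √(∑ k ∈ s, r k) ≤ ∑ k ∈ s, √(r k) :=
  le_sum_of_subadditive sqrt sqrt_zero.le sqrt_add_le_add_sqrt s r

end Real

section Gaps

variable {G : Type*} [AddCommGroup G]

theorem sum_Ico_gap_eq (e f : ℕ → G) {a b : ℕ} (hab : a ≤ b) :
    ∑ c ∈ Ico a b, (e (c + 1) - f c) = e b - e a - ∑ c ∈ Ico a b, (f c - e c) := by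
  rw [← sum_Ico_sub e hab, ← sum_sub_distrib]
  exact sum_congr rfl fun _ _ => by abel

theorem sub_sum_lengths_eq_sum_gaps (e f : ℕ → G) {N : ℕ} (hN : 1 ≤ N) :
    f N - e 1 - ∑ i ∈ Icc 1 N, (f i - e i) = ∑ c ∈ Ico 1 N, (e (c + 1) - f c) := by
  rw [sum_Ico_gap_eq e f hN, ← Ico_add_one_right_eq_Icc, sum_Ico_succ_top hN]
  abel

theorem sum_Ico_gap_le [PartialOrder G] [IsOrderedAddMonoid G] {e f : ℕ → G} {a b : ℕ}
    (hab : a < b) (hef : ∀ i ∈ Ioo a b, e i ≤ f i) :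
    ∑ c ∈ Ico a b, (e (c + 1) - f c) ≤ e b - f a := by
  rw [sum_Ico_gap_eq e f hab.le, sum_eq_sum_Ico_succ_bot hab, Ico_add_one_left_eq_Ioo]
  have hlengths : 0 ≤ ∑ i ∈ Ioo a b, (f i - e i) := sum_nonneg fun i hi => sub_nonneg.2 (hef i hi)
  calc e b - e a - (f a - e a + ∑ i ∈ Ioo a b, (f i - e i))
      = e b - f a - ∑ i ∈ Ioo a b, (f i - e i) := by abel
    _ ≤ e b - f a := sub_le_self _ hlengths

end Gaps

theorem sum_cuts_mul_eq_sum_mul_sum_Ico {ι R : Type*} [CommSemiring R] (K : Finset ι) (N : ℕ)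
    (p q : ι → ℕ) (w : ι → R) (g : ℕ → R) (hpq : ∀ k ∈ K, 1 ≤ p k ∧ q k ≤ N) :
    ∑ c ∈ Ico 1 N, (∑ k ∈ K with p k ≤ c ∧ c < q k, w k) * g c =
      ∑ k ∈ K, w k * ∑ c ∈ Ico (p k) (q k), g c := by
  simp_rw [sum_mul, sum_filter, mul_sum]
  rw [sum_comm]
  refine sum_congr rfl fun k hk => ?_
  rw [← sum_filter]
  congr 1
  ext c
  simp only [mem_filter, mem_Ico]
  have := hpq k hk
  omega

theorem linear_method_general {ι : Type*} (K : Finset ι) (N : ℕ) (hN : 1 ≤ N)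
    (p q : ι → ℕ) (r : ι → ℝ) (e f : ℕ → ℝ) (L : ℝ)
    (hpq : ∀ k ∈ K, 1 ≤ p k ∧ p k < q k ∧ q k ≤ N)
    (hef : ∀ i, 1 ≤ i → i ≤ N → e i ≤ f i)
    (hfe : ∀ i, 1 ≤ i → i < N → f i < e (i + 1))
    (hcut : ∀ c, 1 ≤ c → c < N →
      L ≤ ∑ k ∈ K.filter (fun k => p k ≤ c ∧ c < q k), r k) :
    Real.sqrt L * (f N - e 1 - ∑ i ∈ Finset.Icc 1 N, (f i - e i)) ≤
      ∑ k ∈ K, Real.sqrt (r k) * (e (q k) - f (p k)) := by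
  set g : ℕ → ℝ := fun c => e (c + 1) - f c
  have hg : ∀ c ∈ Ico 1 N, 0 ≤ g c := fun c hc =>
    sub_nonneg.2 (hfe c (mem_Ico.1 hc).1 (mem_Ico.1 hc).2).le
  have hcross : ∀ c ∈ Ico 1 N, √L ≤ ∑ k ∈ K with p k ≤ c ∧ c < q k, √(r k) := fun c hc =>
    (Real.sqrt_le_sqrt (hcut c (mem_Ico.1 hc).1 (mem_Ico.1 hc).2)).trans
      (Real.sqrt_sum_le_sum_sqrt _ _)
  calc √L * (f N - e 1 - ∑ i ∈ Icc 1 N, (f i - e i))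
      = ∑ c ∈ Ico 1 N, √L * g c := by rw [sub_sum_lengths_eq_sum_gaps e f hN, mul_sum]
    _ ≤ ∑ c ∈ Ico 1 N, (∑ k ∈ K with p k ≤ c ∧ c < q k, √(r k)) * g c :=
      sum_le_sum fun c hc => mul_le_mul_of_nonneg_right (hcross c hc) (hg c hc)
    _ = ∑ k ∈ K, √(r k) * ∑ c ∈ Ico (p k) (q k), g c :=
      sum_cuts_mul_eq_sum_mul_sum_Ico K N p q _ g fun k hk => ⟨(hpq k hk).1, (hpq k hk).2.2⟩
    _ ≤ ∑ k ∈ K, √(r k) * (e (q k) - f (p k)) := by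
      refine sum_le_sum fun k hk => mul_le_mul_of_nonneg_left ?_ (Real.sqrt_nonneg _)
      obtain ⟨hp, hlt, hq⟩ := hpq k hk
      exact sum_Ico_gap_le hlt fun i hi => hef i (by grind) (by grind)

/-- Abstract form of the 'linear method' (Proposition 4.2). Collars `k ∈ ι` are labeled
by pairs `(p k, q k)` with `1 ≤ p k < q k ≤ N`, carry positive weights `r k`, and
`[e₁,f₁], …, [e_N,f_N]` are disjoint ordered closed intervals. If for every cut
`1 ≤ K < N` the total weight of collars crossing the cut is at least `L > 0`, then
`∑_k √(r k) (e_{q k} - f_{p k}) ≥ √L (f_N - e₁ - ∑ᵢ (fᵢ - eᵢ))`. -/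
theorem linear_method {ι : Type*} [DecidableEq ι] (K : Finset ι) (N : ℕ) (hN : 1 ≤ N)
    (p q : ι → ℕ) (r : ι → ℝ) (e f : ℕ → ℝ) (L : ℝ) (hL : 0 < L)
    (hpq : ∀ k ∈ K, 1 ≤ p k ∧ p k < q k ∧ q k ≤ N)
    (hr : ∀ k ∈ K, 0 < r k)
    (hef : ∀ i, 1 ≤ i → i ≤ N → e i ≤ f i)
    (hfe : ∀ i, 1 ≤ i → i < N → f i < e (i + 1))
    (hcut : ∀ c, 1 ≤ c → c < N →
      L ≤ ∑ k ∈ K.filter (fun k => p k ≤ c ∧ c < q k), r k) :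
    Real.sqrt L * (f N - e 1 - ∑ i ∈ Finset.Icc 1 N, (f i - e i)) ≤
      ∑ k ∈ K, Real.sqrt (r k) * (e (q k) - f (p k)) :=
  linear_method_general K N hN p q r e f L hpq hef hfe hcut
end
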